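/- arXiv:math/0209354 — 3 statements merged into one kernel-verified Lean document; each statement's English description precedes it below -/
import Mathlib

section
/- For every positive integer n, the Catalan matroid C_n is representable over the field ℚ of rational numbers; that is, C_n is isomorphic to the vector matroid of a family of 2n vectors in a ℚ-vector space. -/
/-- Height of the path with up-step set `A` after `x` steps: `2·|A ∩ {1,…,x}| − x`. -/
def ht (A : Finset ℕ) (x : ℕ) : ℤ := 2 * (A ∩ Finset.Icc 1 x).card - x

/-- `P` is the up-step set of a Dyck path of length `2n`. -/
def IsDyck (n : ℕ) (P : Finset ℕ) : Prop :=
  P ⊆ Finset.Icc 1 (2 * n) ∧ P.card = n ∧ ∀ x ≤ 2 * n, 0 ≤ ht P x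

open Finset Submodule Module

/-- The set of standard basis vectors `e_i` of `ℚ^n` with `u ≤ i+1` (0-indexed `i`). -/
def Wset (n u : ℕ) : Set (Fin n → ℚ) :=
  (fun i : Fin n => Pi.single i (1:ℚ)) '' {i : Fin n | u ≤ (i : ℕ) + 1}

/-- Span of the vectors of `A` together with the tail flag subspace `W_u`. -/
def spn (n : ℕ) (v : ℕ → (Fin n → ℚ)) (A : Finset ℕ) (u : ℕ) : Submodule ℚ (Fin n → ℚ) :=
  Submodule.span ℚ (v '' ↑A ∪ Wset n u)

/-- One term of the rank formula. -/
def trm (n : ℕ) (A : Finset ℕ) (u' : ℕ) : ℕ :=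
  (A.filter (fun a => a + 3 ≤ 2 * u')).card + (n + 1 - u')

/-- The rank formula: `min` of the terms over `0 ≤ u' ≤ u`. -/
def fk (n : ℕ) (A : Finset ℕ) (u : ℕ) : ℕ :=
  (Finset.Icc 0 u).inf' ⟨0, by simp⟩ (trm n A)

lemma fk_le {n : ℕ} {A : Finset ℕ} {u u' : ℕ} (h : u' ≤ u) : fk n A u ≤ trm n A u' :=
  Finset.inf'_le _ (by simp [Finset.mem_Icc, h])

lemma le_fk {n : ℕ} {A : Finset ℕ} {u m : ℕ} (h : ∀ u' ≤ u, m ≤ trm n A u') :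
    m ≤ fk n A u := by
  apply Finset.le_inf'
  intro b hb
  exact h b (by simpa using hb)

lemma fk_exists {n : ℕ} (A : Finset ℕ) (u : ℕ) : ∃ u' ≤ u, fk n A u = trm n A u' := by
  obtain ⟨i, hi, h⟩ := Finset.exists_mem_eq_inf' (H := ⟨0, by simp⟩) (s := Finset.Icc 0 u) (trm n A)
  exact ⟨i, by simpa using hi, h⟩

lemma fk_empty (n u : ℕ) : fk n ∅ u = n + 1 - u := by
  have h1 : fk n ∅ u ≤ trm n ∅ u := fk_le le_rfl
  have h2 : n + 1 - u ≤ fk n ∅ u := by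
    apply le_fk
    intro u' hu'
    simp only [trm, Finset.filter_empty, Finset.card_empty, zero_add]
    omega
  simp only [trm, Finset.filter_empty, Finset.card_empty, zero_add] at h1
  omega

lemma fk_insert_of_le {n : ℕ} {A : Finset ℕ} {j u : ℕ} (hu : u ≤ (j + 2) / 2) :
    fk n (insert j A) u = fk n A u := by
  have hterm : ∀ u' ≤ u, trm n (insert j A) u' = trm n A u' := by
    intro u' hu'
    unfold trm
    rw [Finset.filter_insert, if_neg (by omega)]
  apply le_antisymm
  · obtain ⟨u', hu', he⟩ := fk_exists (n := n) A u
    rw [← hterm u' hu'] at he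
    exact he ▸ fk_le hu'
  · obtain ⟨u', hu', he⟩ := fk_exists (n := n) (insert j A) u
    rw [hterm u' hu'] at he
    exact he ▸ fk_le hu'

lemma fk_insert_of_gt {n : ℕ} {A : Finset ℕ} {j u : ℕ} (hj : j ∉ A) (ht : (j + 2) / 2 < u) :
    fk n (insert j A) u = min (fk n A u + 1) (fk n A ((j + 2) / 2)) := by
  set t := (j + 2) / 2 with htdef
  have hterm : ∀ u', trm n (insert j A) u'
      = trm n A u' + (if j + 3 ≤ 2 * u' then 1 else 0) := by
    intro u'
    unfold trm
    rw [Finset.filter_insert]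
    by_cases h : j + 3 ≤ 2 * u'
    · rw [if_pos h, if_pos h, Finset.card_insert_of_notMem (by simp [hj])]
      omega
    · rw [if_neg h, if_neg h]
      omega
  apply le_antisymm
  · apply le_min
    · obtain ⟨u', hu', he⟩ := fk_exists (n := n) A u
      calc fk n (insert j A) u ≤ trm n (insert j A) u' := fk_le hu'
        _ ≤ trm n A u' + 1 := by rw [hterm]; split <;> omega
        _ = fk n A u + 1 := by rw [he]
    · obtain ⟨u', hu', he⟩ := fk_exists (n := n) A t
      calc fk n (insert j A) u ≤ trm n (insert j A) u' := fk_le (by omega)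
        _ = trm n A u' := by rw [hterm, if_neg (by omega)]; omega
        _ = fk n A t := he.symm
  · apply le_fk
    intro u' hu'
    by_cases h : u' ≤ t
    · calc min (fk n A u + 1) (fk n A t) ≤ fk n A t := min_le_right _ _
        _ ≤ trm n A u' := fk_le h
        _ ≤ trm n (insert j A) u' := by rw [hterm]; omega
    · calc min (fk n A u + 1) (fk n A t) ≤ fk n A u + 1 := min_le_left _ _
        _ ≤ trm n A u' + 1 := by have := fk_le (n := n) (A := A) hu'; omega
        _ = trm n (insert j A) u' := by rw [hterm, if_pos (by omega)]

section Avoid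

variable {V : Type} [AddCommGroup V] [Module ℚ V]

/-- Over `ℚ`, a subspace `W` contains a vector avoiding any finite list of subspaces
that do not contain `W`. -/
lemma avoid_list (W : Submodule ℚ V) :
    ∀ l : List (Submodule ℚ V), ∃ w ∈ W, ∀ p ∈ l, ¬ W ≤ p → w ∉ p := by
  intro l
  induction l with
  | nil => exact ⟨0, W.zero_mem, by simp⟩
  | cons p l ih =>
    obtain ⟨w1, hw1W, hw1⟩ := ih
    by_cases hWp : W ≤ p
    · refine ⟨w1, hw1W, ?_⟩
      intro q hq hq2
      rcases List.mem_cons.1 hq with h | h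
      · exact absurd (h ▸ hWp) hq2
      · exact hw1 q h hq2
    · obtain ⟨w2, hw2W, hw2p⟩ : ∃ w2 ∈ W, w2 ∉ p := by
        by_contra hcon
        push_neg at hcon
        exact hWp hcon
      by_cases hw1p : w1 ∈ p
      · -- pick a good coefficient c
        have hfin : ({c : ℚ | ∃ q ∈ l, ¬ W ≤ q ∧ w2 + c • w1 ∈ q}).Finite := by
          have : {c : ℚ | ∃ q ∈ l, ¬ W ≤ q ∧ w2 + c • w1 ∈ q}
              ⊆ ⋃ q ∈ {q | q ∈ l ∧ ¬ W ≤ q}, {c : ℚ | w2 + c • w1 ∈ q} := by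
            intro c hc
            obtain ⟨q, hq, hq2, hq3⟩ := hc
            exact Set.mem_biUnion ⟨hq, hq2⟩ hq3
          refine Set.Finite.subset (Set.Finite.biUnion ?_ ?_) this
          · exact Set.Finite.subset l.finite_toSet (fun q hq => hq.1)
          · rintro q ⟨hql, hqW⟩
            have hw1q : w1 ∉ q := hw1 q hql hqW
            apply Set.Subsingleton.finite
            intro c hc c' hc'
            by_contra hne
            have : (c - c') • w1 ∈ q := by
              have := q.sub_mem hc hc'
              simpa [sub_smul] using this
            have : w1 ∈ q := by
              have h2 := q.smul_mem (c - c')⁻¹ this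
              rwa [smul_smul, inv_mul_cancel₀ (sub_ne_zero.2 hne), one_smul] at h2
            exact hw1q this
        obtain ⟨c, hc⟩ : ∃ c : ℚ, c ∉ {c : ℚ | ∃ q ∈ l, ¬ W ≤ q ∧ w2 + c • w1 ∈ q} :=
          (hfin.infinite_compl).nonempty
        refine ⟨w2 + c • w1, W.add_mem hw2W (W.smul_mem c hw1W), ?_⟩
        intro q hq hqW
        rcases List.mem_cons.1 hq with h | h
        · subst h
          intro hmem
          exact hw2p (by simpa using q.sub_mem hmem (q.smul_mem c hw1p))
        · intro hmem
          exact hc ⟨q, h, hqW, hmem⟩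
      · refine ⟨w1, hw1W, ?_⟩
        intro q hq hqW
        rcases List.mem_cons.1 hq with h | h
        · exact h ▸ hw1p
        · exact hw1 q h hqW

variable [FiniteDimensional ℚ V]

lemma finrank_sup_singleton_not_mem (p : Submodule ℚ V) (w : V) (h : w ∉ p) :
    finrank ℚ ↥(p ⊔ ℚ ∙ w) = finrank ℚ p + 1 := by
  have hw0 : w ≠ 0 := fun h0 => h (h0 ▸ p.zero_mem)
  have hinf : p ⊓ (ℚ ∙ w) = ⊥ := by
    rw [eq_bot_iff]
    rintro x ⟨hxp, hxw⟩
    obtain ⟨c, rfl⟩ := Submodule.mem_span_singleton.1 hxw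
    rcases eq_or_ne c 0 with rfl | hc
    · simp
    · exfalso
      apply h
      have := p.smul_mem c⁻¹ hxp
      rwa [smul_smul, inv_mul_cancel₀ hc, one_smul] at this
  have := Submodule.finrank_sup_add_finrank_inf_eq p (ℚ ∙ w)
  rw [hinf, finrank_bot, finrank_span_singleton hw0] at this
  omega

end Avoid

section WsetLemmas

lemma Wset_antitone {n : ℕ} {t u : ℕ} (h : t ≤ u) : Wset n u ⊆ Wset n t := by
  rintro x ⟨i, hi, rfl⟩
  exact ⟨i, by simp only [Set.mem_setOf_eq] at hi ⊢; omega, rfl⟩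

lemma Wset_empty (n : ℕ) : Wset n (n + 1) = ∅ := by
  ext x
  simp only [Wset, Set.mem_image, Set.mem_setOf_eq, Set.mem_empty_iff_false, iff_false]
  rintro ⟨i, hi, rfl⟩
  have := i.2
  omega

lemma finrank_span_Wset (n u : ℕ) (h1 : 1 ≤ u) (h2 : u ≤ n + 1) :
    finrank ℚ (Submodule.span ℚ (Wset n u)) = n + 1 - u := by
  have hli : LinearIndependent ℚ (fun i : {i : Fin n // u ≤ (i : ℕ) + 1} =>
      (Pi.single (i : Fin n) (1 : ℚ) : Fin n → ℚ)) := by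
    have hb := (Pi.basisFun ℚ (Fin n)).linearIndependent
    have := hb.comp (fun i : {i : Fin n // u ≤ (i : ℕ) + 1} => (i : Fin n))
      Subtype.val_injective
    simpa [Function.comp_def] using this
  have hrange : Set.range (fun i : {i : Fin n // u ≤ (i : ℕ) + 1} =>
      (Pi.single (i : Fin n) (1 : ℚ) : Fin n → ℚ)) = Wset n u := by
    rw [Wset, Set.image_eq_range]
    rfl
  have := linearIndependent_iff_card_eq_finrank_span.1 hli
  rw [hrange] at this
  rw [Set.finrank] at this
  rw [← this]
  have hcard : Fintype.card {i : Fin n // u ≤ (i : ℕ) + 1}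
      = ((Finset.range n).filter (fun m => u ≤ m + 1)).card := by
    rw [Fintype.card_subtype]
    rw [← Finset.card_map ⟨Fin.val, Fin.val_injective⟩]
    congr 1
    ext m
    simp only [Finset.mem_map, Finset.mem_filter, Finset.mem_univ, true_and,
      Finset.mem_range, Function.Embedding.coeFn_mk]
    constructor
    · rintro ⟨i, hi, rfl⟩; exact ⟨i.2, hi⟩
    · rintro ⟨hm, hum⟩; exact ⟨⟨m, hm⟩, hum, rfl⟩
  rw [hcard]
  have : (Finset.range n).filter (fun m => u ≤ m + 1) = Finset.Ico (u - 1) n := by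
    ext m
    simp only [Finset.mem_filter, Finset.mem_range, Finset.mem_Ico]
    omega
  rw [this, Nat.card_Ico]
  omega

end WsetLemmas
section Build

lemma spn_congr {n : ℕ} {v v' : ℕ → Fin n → ℚ} {A : Finset ℕ}
    (h : ∀ a ∈ A, v' a = v a) (u : ℕ) : spn n v' A u = spn n v A u := by
  unfold spn
  have : v' '' ↑A = v '' ↑A := Set.image_congr (fun a ha => h a (by simpa using ha))
  rw [this]

lemma spn_mono_u {n : ℕ} {v : ℕ → Fin n → ℚ} {A : Finset ℕ} {t u : ℕ} (h : t ≤ u) :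
    spn n v A u ≤ spn n v A t :=
  Submodule.span_mono (Set.union_subset_union_right _ (Wset_antitone h))

lemma spn_insert {n : ℕ} {v : ℕ → Fin n → ℚ} {A : Finset ℕ} {j u : ℕ} (hjA : j ∈ A) :
    spn n v A u = (ℚ ∙ v j) ⊔ spn n v (A.erase j) u := by
  unfold spn
  conv_lhs => rw [← Finset.insert_erase hjA]
  rw [Finset.coe_insert, Set.image_insert_eq, Set.insert_union, Submodule.span_insert]

lemma build (n : ℕ) (j : ℕ) : ∃ v : ℕ → (Fin n → ℚ),
    ∀ A ⊆ Finset.Icc 1 j, ∀ u, 1 ≤ u → u ≤ n + 1 →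
      finrank ℚ (spn n v A u) = fk n A u := by
  induction j with
  | zero =>
    refine ⟨fun _ _ => 0, ?_⟩
    intro A hA u hu1 hu2
    have hAe : A = ∅ := by
      rw [Finset.Icc_eq_empty (by omega)] at hA
      exact Finset.subset_empty.1 hA
    subst hAe
    rw [fk_empty]
    have hset : ((fun _ _ => (0:ℚ)) '' (((∅ : Finset ℕ) : Set ℕ)) ∪ Wset n u) = Wset n u := by
      simp
    unfold spn
    rw [hset]
    exact finrank_span_Wset n u hu1 hu2
  | succ j ih =>
    obtain ⟨v, hv⟩ := ih
    set t := (j + 1 + 2) / 2 with htdef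
    obtain ⟨w, hwW, hw⟩ := avoid_list (Submodule.span ℚ (Wset n t))
      ((((Finset.Icc 1 j).powerset ×ˢ Finset.Icc 1 (n+1)).toList).map
        (fun q => spn n v q.1 q.2))
    refine ⟨Function.update v (j+1) w, ?_⟩
    intro A hA u hu1 hu2
    by_cases hjA : j + 1 ∈ A
    · set A' := A.erase (j+1) with hA'def
      have hA' : A' ⊆ Finset.Icc 1 j := by
        intro a ha
        have h1 := Finset.mem_of_mem_erase ha
        have h2 := Finset.ne_of_mem_erase ha
        have h3 := hA h1
        simp only [Finset.mem_Icc] at h3 ⊢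
        omega
      have hj' : j + 1 ∉ A' := Finset.notMem_erase _ _
      have hspn : spn n (Function.update v (j+1) w) A u = (ℚ ∙ w) ⊔ spn n v A' u := by
        rw [spn_insert (v := Function.update v (j+1) w) hjA, Function.update_self]
        rw [spn_congr (fun a ha => Function.update_of_ne (Finset.ne_of_mem_erase ha) _ _) u]
      have hAins : A = insert (j+1) A' := (Finset.insert_erase hjA).symm
      have hWt_le : Submodule.span ℚ (Wset n t) ≤ spn n v A' t :=
        Submodule.span_le.2 (fun x hx => Submodule.subset_span (Set.mem_union_right _ hx))
      have ht1 : 1 ≤ t := by omega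
      by_cases hut : u ≤ t
      · have hwmem : w ∈ spn n v A' u := by
          refine Submodule.span_le.2
            (fun x hx => Submodule.subset_span (Set.mem_union_right _ (Wset_antitone hut hx))) hwW
        rw [hspn, sup_eq_right.2 ((Submodule.span_singleton_le_iff_mem _ _).2 hwmem)]
        rw [hv A' hA' u hu1 hu2, hAins, fk_insert_of_le (by omega)]
      · push_neg at hut
        have hmem : spn n v A' u ∈
            ((((Finset.Icc 1 j).powerset ×ˢ Finset.Icc 1 (n+1)).toList).map
              (fun q => spn n v q.1 q.2)) := by
          apply List.mem_map.2
          refine ⟨(A', u), ?_, rfl⟩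
          rw [Finset.mem_toList, Finset.mem_product, Finset.mem_powerset, Finset.mem_Icc]
          exact ⟨hA', hu1, hu2⟩
        have ht2 : t ≤ n + 1 := by omega
        have hfk : fk n A u = min (fk n A' u + 1) (fk n A' t) := by
          rw [hAins]
          exact fk_insert_of_gt hj' hut
        by_cases hWle : Submodule.span ℚ (Wset n t) ≤ spn n v A' u
        · have hwmem : w ∈ spn n v A' u := hWle hwW
          have heq : spn n v A' t = spn n v A' u := by
            refine le_antisymm ?_ (spn_mono_u hut.le)
            refine Submodule.span_le.2 (Set.union_subset ?_ ?_)
            · exact fun x hx => Submodule.subset_span (Set.mem_union_left _ hx)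
            · exact fun x hx => hWle (Submodule.subset_span hx)
          have hfk2 : fk n A' t = fk n A' u := by
            rw [← hv A' hA' t ht1 ht2, ← hv A' hA' u hu1 hu2, heq]
          rw [hspn, sup_eq_right.2 ((Submodule.span_singleton_le_iff_mem _ _).2 hwmem)]
          rw [hv A' hA' u hu1 hu2, hfk, hfk2]
          omega
        · have hwnot : w ∉ spn n v A' u := hw _ hmem hWle
          rw [hspn, sup_comm, finrank_sup_singleton_not_mem _ _ hwnot]
          rw [hv A' hA' u hu1 hu2, hfk]
          have hlt : fk n A' u < fk n A' t := by
            rw [← hv A' hA' u hu1 hu2, ← hv A' hA' t ht1 ht2]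
            apply Submodule.finrank_lt_finrank_of_lt
            refine lt_of_le_of_ne (spn_mono_u hut.le) ?_
            intro heq
            exact hWle (heq ▸ hWt_le)
          omega
    · have hA2 : A ⊆ Finset.Icc 1 j := by
        intro a ha
        have h1 := hA ha
        have h2 : a ≠ j + 1 := fun h => hjA (h ▸ ha)
        simp only [Finset.mem_Icc] at h1 ⊢
        omega
      rw [spn_congr (fun a ha => Function.update_of_ne
        (by intro h; subst h; exact hjA ha) _ _) u]
      exact hv A hA2 u hu1 hu2

end Build
section Comb

/-- The Hall-type condition characterizing independent sets of the Catalan matroid. -/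
def Hall (n : ℕ) (A : Finset ℕ) : Prop :=
  ∀ k ≤ n, (A.filter (fun a => 2 * k ≤ a)).card ≤ n - k

lemma filter_split (A : Finset ℕ) (u' : ℕ) (h : 1 ≤ u') :
    (A.filter (fun a => a + 3 ≤ 2 * u')).card
      + (A.filter (fun a => 2 * (u' - 1) ≤ a)).card = A.card := by
  have h2 : A.filter (fun a => ¬ (a + 3 ≤ 2 * u')) = A.filter (fun a => 2 * (u' - 1) ≤ a) := by
    apply Finset.filter_congr
    intro a _
    constructor
    · intro hx; omega
    · intro hx; omega
  rw [← h2]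
  exact Finset.card_filter_add_card_filter_not _

lemma hall_iff_fk {n : ℕ} {A : Finset ℕ} (hA : A ⊆ Finset.Icc 1 (2 * n)) :
    Hall n A ↔ A.card = fk n A (n + 1) := by
  constructor
  · intro hH
    have hub : fk n A (n + 1) ≤ A.card := by
      have h1 : A.filter (fun a => a + 3 ≤ 2 * (n + 1)) = A := by
        apply Finset.filter_true_of_mem
        intro a ha
        have h2 := hA ha
        rw [Finset.mem_Icc] at h2
        have h3 := hH n le_rfl
        have h4 : a ∉ A.filter (fun a => 2 * n ≤ a) := by
          intro hmem
          have := Finset.card_pos.2 ⟨a, hmem⟩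
          omega
        rw [Finset.mem_filter] at h4
        push_neg at h4
        have := h4 ha
        omega
      have := fk_le (n := n) (A := A) (u := n + 1) (u' := n + 1) le_rfl
      rw [trm, h1] at this
      omega
    have hlb : A.card ≤ fk n A (n + 1) := by
      apply le_fk
      intro u' hu'
      rcases Nat.eq_zero_or_pos u' with rfl | hpos
      · have h0 := hH 0 (by omega)
        have h1 : A.filter (fun a => 2 * 0 ≤ a) = A := by
          apply Finset.filter_true_of_mem; intro a _; omega
        rw [h1] at h0
        rw [trm]
        omega
      · have hsplit := filter_split A u' hpos
        have hH' := hH (u' - 1) (by omega)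
        have : 2 * (u' - 1) = 2 * (u' - 1) := rfl
        rw [trm]
        omega
    omega
  · intro hfk k hk
    have h1 := fk_le (n := n) (A := A) (u := n + 1) (u' := k + 1) (by omega)
    rw [trm] at h1
    have hsplit := filter_split A (k + 1) (by omega)
    simp only [Nat.add_sub_cancel] at hsplit
    omega

lemma dyck_hall {n : ℕ} {A B : Finset ℕ} (hB : IsDyck n B) (hAB : A ⊆ B) : Hall n A := by
  obtain ⟨hBsub, hBcard, hht⟩ := hB
  intro k hk
  have hmono : (A.filter (fun a => 2 * k ≤ a)).card ≤ (B.filter (fun a => 2 * k ≤ a)).card :=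
    Finset.card_le_card (Finset.filter_subset_filter _ hAB)
  rcases Nat.eq_zero_or_pos k with rfl | hkpos
  · have : (B.filter (fun a => 2 * 0 ≤ a)).card ≤ n := by
      calc (B.filter (fun a => 2 * 0 ≤ a)).card ≤ B.card := Finset.card_filter_le _ _
        _ = n := hBcard
    omega
  · have hx := hht (2 * k - 1) (by omega)
    rw [ht] at hx
    have hc : k ≤ (B ∩ Finset.Icc 1 (2 * k - 1)).card := by
      have := hx
      push_cast at this
      omega
    have hpart : (B.filter (fun a => 2 * k ≤ a)).card + (B ∩ Finset.Icc 1 (2 * k - 1)).card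
        = B.card := by
      have heq : B.filter (fun a => ¬ 2 * k ≤ a) = B ∩ Finset.Icc 1 (2 * k - 1) := by
        ext a
        simp only [Finset.mem_filter, Finset.mem_inter, Finset.mem_Icc]
        constructor
        · rintro ⟨haB, hlt⟩
          have h2 := hBsub haB
          rw [Finset.mem_Icc] at h2
          exact ⟨haB, h2.1, by omega⟩
        · rintro ⟨haB, _, hle⟩
          exact ⟨haB, by omega⟩
      rw [← heq]
      exact Finset.card_filter_add_card_filter_not _
    omega

lemma hall_dyck_aux {n : ℕ} : ∀ d (A : Finset ℕ), A ⊆ Finset.Icc 1 (2 * n) → Hall n A →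
    A.card + d = n → ∃ B, IsDyck n B ∧ A ⊆ B := by
  intro d
  induction d with
  | zero =>
    intro A hA hH hcard
    refine ⟨A, ⟨hA, by omega, ?_⟩, Finset.Subset.refl A⟩
    intro x hx
    rw [ht]
    set k := (x + 1) / 2 with hkdef
    have hk : k ≤ n := by omega
    have hpart : (A.filter (fun a => x + 1 ≤ a)).card + (A ∩ Finset.Icc 1 x).card
        = A.card := by
      have heq : A.filter (fun a => ¬ x + 1 ≤ a) = A ∩ Finset.Icc 1 x := by
        ext a
        simp only [Finset.mem_filter, Finset.mem_inter, Finset.mem_Icc]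
        constructor
        · rintro ⟨haA, hlt⟩
          have h2 := hA haA
          rw [Finset.mem_Icc] at h2
          exact ⟨haA, h2.1, by omega⟩
        · rintro ⟨haA, _, hle⟩
          exact ⟨haA, by omega⟩
      rw [← heq]
      exact Finset.card_filter_add_card_filter_not _
    have hsub : A.filter (fun a => x + 1 ≤ a) ⊆ A.filter (fun a => 2 * k ≤ a) := by
      intro a ha
      rw [Finset.mem_filter] at ha ⊢
      exact ⟨ha.1, by omega⟩
    have hHk := hH k hk
    have hcard2 := Finset.card_le_card hsub
    have hge : k ≤ (A ∩ Finset.Icc 1 x).card := by omega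
    omega
  | succ d ih =>
    intro A hA hH hcard
    have hCcard : 0 < ((Finset.Icc 1 (2 * n)) \ A).card := by
      rw [Finset.card_sdiff_of_subset hA, Nat.card_Icc]
      omega
    obtain ⟨hne⟩ : Nonempty ((Finset.Icc 1 (2 * n)) \ A).Nonempty :=
      ⟨Finset.card_pos.1 hCcard⟩
    set e := ((Finset.Icc 1 (2 * n)) \ A).min' hne with hedef
    have he : e ∈ (Finset.Icc 1 (2 * n)) \ A := Finset.min'_mem _ _
    rw [Finset.mem_sdiff, Finset.mem_Icc] at he
    obtain ⟨⟨he1, he2⟩, heA⟩ := he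
    have hbelow : ∀ m, 1 ≤ m → m < e → m ∈ A := by
      intro m h1 h2
      by_contra hmA
      have hmC : m ∈ (Finset.Icc 1 (2 * n)) \ A := by
        rw [Finset.mem_sdiff, Finset.mem_Icc]
        exact ⟨⟨h1, by omega⟩, hmA⟩
      have := Finset.min'_le _ m hmC
      omega
    have hsub' : insert e A ⊆ Finset.Icc 1 (2 * n) := by
      intro a ha
      rcases Finset.mem_insert.1 ha with rfl | h
      · rw [Finset.mem_Icc]; omega
      · exact hA h
    have hH' : Hall n (insert e A) := by
      intro k hk
      rw [Finset.filter_insert]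
      by_cases h2k : 2 * k ≤ e
      · rw [if_pos h2k, Finset.card_insert_of_notMem (by simp [heA])]
        rcases Nat.eq_zero_or_pos k with rfl | hkpos
        · have h1 : A.filter (fun a => 2 * 0 ≤ a) = A := by
            apply Finset.filter_true_of_mem; intro a _; omega
          rw [h1]
          omega
        · have heq : A.filter (fun a => ¬ 2 * k ≤ a) = Finset.Icc 1 (2 * k - 1) := by
            ext a
            simp only [Finset.mem_filter, Finset.mem_Icc]
            constructor
            · rintro ⟨haA, hlt⟩
              have h2 := hA haA
              rw [Finset.mem_Icc] at h2
              exact ⟨h2.1, by omega⟩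
            · rintro ⟨h1, hle⟩
              exact ⟨hbelow a h1 (by omega), by omega⟩
          have hpart := Finset.card_filter_add_card_filter_not
            (s := A) (p := fun a => 2 * k ≤ a)
          rw [heq, Nat.card_Icc] at hpart
          have hHk := hH k hk
          omega
      · rw [if_neg h2k]
        exact hH k hk
    have hcard' : (insert e A).card + d = n := by
      rw [Finset.card_insert_of_notMem heA]
      omega
    obtain ⟨B, hB, hABB⟩ := ih (insert e A) hsub' hH' hcard'
    exact ⟨B, hB, Finset.Subset.trans (Finset.subset_insert _ _) hABB⟩

end Comb

/-- The Catalan matroid is representable over `ℚ`. -/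
theorem catalan_representable_rat (n : ℕ) (hn : 0 < n) :
    ∃ (V : Type) (_ : AddCommGroup V) (_ : Module ℚ V) (v : ℕ → V),
      ∀ A : Finset ℕ, A ⊆ Finset.Icc 1 (2 * n) →
        ((∃ B : Finset ℕ, IsDyck n B ∧ A ⊆ B) ↔
          LinearIndependent ℚ (fun x : A => v x.1)) := by
  obtain ⟨v, hv⟩ := build n (2 * n)
  refine ⟨Fin n → ℚ, inferInstance, inferInstance, v, ?_⟩
  intro A hA
  have hspn : spn n v A (n + 1) = Submodule.span ℚ (v '' ↑A) := by
    unfold spn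
    rw [Wset_empty, Set.union_empty]
  have hrank : finrank ℚ (Submodule.span ℚ (v '' ↑A)) = fk n A (n + 1) := by
    rw [← hspn]
    exact hv A hA (n + 1) (by omega) le_rfl
  have hli : LinearIndependent ℚ (fun x : A => v x.1) ↔ A.card = fk n A (n + 1) := by
    rw [linearIndependent_iff_card_eq_finrank_span]
    have hr : Set.range (fun x : A => v x.1) = v '' ↑A := (Set.image_eq_range v ↑A).symm
    rw [hr, Set.finrank, hrank, Fintype.card_coe]
  rw [hli]
  constructor
  · rintro ⟨B, hB, hAB⟩
    exact (hall_iff_fk hA).1 (dyck_hall hB hAB)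
  · intro h
    have hH := (hall_iff_fk hA).2 h
    have hcard : A.card ≤ n := by
      have := hH 0 (by omega)
      have h1 : A.filter (fun a => 2 * 0 ≤ a) = A := by
        apply Finset.filter_true_of_mem; intro a _; omega
      rw [h1] at this
      omega
    exact hall_dyck_aux (n - A.card) A hA hH (by omega)
end

section
/- For any positive integers s_1 < s_2 < ⋯ < s_n, the shifted matroid SM(s_1,…,s_n) is representable over the field ℚ of rational numbers; that is, SM(s_1,…,s_n) is isomorphic to the vector matroid of a family of s_n vectors in a ℚ-vector space. -/
/-!
Take `v_j ∈ ℚⁿ` with `i`-th coordinate `(n + 1) ^ (2 j i)` if `j ≤ s_i` and `0` otherwise.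

A set `A` of positive integers is independent in `SM(s)` iff `|A| ≤ n` and, for every `i`, at most
`n - 1 - i` elements of `A` exceed `s_i`: such a set is completed to a basis by repeatedly adding
the least positive integer it misses. The vectors `v_a` with `a > s_i` vanish on the first `i + 1`
coordinates, so a linearly independent family satisfies these bounds.

Conversely, if `A = {a_0 < ⋯ < a_{k-1}}` satisfies them, then `a_l ≤ s_{n-k+l}`, so the minor on
the last `k` rows is a generalised Vandermonde matrix `(q ^ (2 a_m (n - k + l)))`, `q = n + 1`, with
nonzero diagonal and some entries above it replaced by `0`. With `F l = ∑_{j<l} (2 a_j + 1)`,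
scaling row `l` by `q ^ (-F l)` and column `m` by `q ^ (F m - 2 a_m (n - k + m))` turns the
diagonal entries into `1` and the others into `0` or powers `q ^ e` with `e ≤ -1`, so the scaled
minor is strictly diagonally dominant, hence invertible.
-/

open Finset

/-- `A` is a basis of the shifted matroid `SM(s_0, …, s_{n-1})`: an `n`-element set of
positive integers whose `i`-th smallest element is at most `s i`. -/
def IsShiftedBasis (n : ℕ) (s : Fin n → ℕ) (A : Finset ℕ) : Prop :=
  (∀ a ∈ A, 0 < a) ∧ ∃ h : A.card = n, ∀ i : Fin n, (A.orderIsoOfFin h i : ℕ) ≤ s i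

theorem Finset.orderEmbOfFin_le_iff {α : Type*} [LinearOrder α] (A : Finset α) {k : ℕ}
    (h : #A = k) (j : Fin k) (y : α) :
    A.orderEmbOfFin h j ≤ y ↔ #{a ∈ A | y < a} + j + 1 ≤ k := by
  set e := A.orderEmbOfFin h
  have hcount : #{a ∈ A | y < a} = #{i | y < e i} := by
    rw [← A.map_orderEmbOfFin_univ h, filter_map, card_map]
    rfl
  rw [hcount]
  constructor
  · intro hj
    have : ({i | y < e i} : Finset (Fin k)) ⊆ Ioi j := fun i hi => by
      simp only [mem_filter, mem_univ, true_and] at hi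
      exact mem_Ioi.2 (e.lt_iff_lt.1 (hj.trans_lt hi))
    have := card_le_card this
    rw [Fin.card_Ioi] at this
    omega
  · intro hcard
    by_contra! hj
    have : Ici j ⊆ ({i | y < e i} : Finset (Fin k)) := fun i hi =>
      mem_filter.2 ⟨mem_univ i, hj.trans_le (e.monotone (mem_Ici.1 hi))⟩
    have := card_le_card this
    rw [Fin.card_Ici] at this
    omega

theorem Fin.add_one_le_of_strictMono {n : ℕ} {s : Fin n → ℕ} (hs : StrictMono s)
    (hpos : ∀ i, 0 < s i) (i : Fin n) : (i : ℕ) + 1 ≤ s i := by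
  have := card_le_card_of_injOn s (s := Iic i) (t := Icc 1 (s i))
    (fun j hj => mem_Icc.2 ⟨hpos j, hs.monotone (mem_Iic.1 hj)⟩) hs.injective.injOn
  rwa [Fin.card_Iic, Nat.card_Icc, Nat.add_sub_cancel] at this

def ShiftedBound (n : ℕ) (s : Fin n → ℕ) (A : Finset ℕ) : Prop :=
  #A ≤ n ∧ ∀ i : Fin n, #{a ∈ A | s i < a} + i + 1 ≤ n

namespace ShiftedBound

variable {n : ℕ} {s : Fin n → ℕ}

theorem mono {A B : Finset ℕ} (hB : ShiftedBound n s B) (hAB : A ⊆ B) : ShiftedBound n s A :=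
  ⟨(card_le_card hAB).trans hB.1, fun i =>
    (Nat.add_le_add_right (Nat.add_le_add_right
      (card_le_card (filter_subset_filter _ hAB)) _) _).trans (hB.2 i)⟩

/-- If `s i < x`, then `A` contains all of `1, …, s i`, so at most `#A - s i` elements of `A`
exceed `s i`. -/
theorem insert (hs : StrictMono s) (hpos : ∀ i, 0 < s i) {A : Finset ℕ}
    (hA : ShiftedBound n s A) (hlt : #A < n) {x : ℕ} (hx : x ∉ A)
    (hbelow : ∀ y, 0 < y → y < x → y ∈ A) : ShiftedBound n s (insert x A) := by
  refine ⟨by rw [card_insert_of_notMem hx]; omega, fun i => ?_⟩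
  rw [filter_insert]
  split_ifs with hix
  · have hIcc : Icc 1 (s i) ⊆ {a ∈ A | ¬ s i < a} := fun y hy => by
      rw [mem_Icc] at hy
      exact mem_filter.2 ⟨hbelow y hy.1 (by omega), by omega⟩
    have := card_le_card hIcc
    have := card_filter_add_card_filter_not (s := A) (s i < ·)
    have := Fin.add_one_le_of_strictMono hs hpos i
    rw [card_insert_of_notMem fun h => hx (mem_filter.1 h).1, Nat.card_Icc] at *
    omega
  · exact hA.2 i

end ShiftedBound

theorem isShiftedBasis_iff {n : ℕ} {s : Fin n → ℕ} {B : Finset ℕ} :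
    IsShiftedBasis n s B ↔ (∀ a ∈ B, 0 < a) ∧ #B = n ∧ ShiftedBound n s B := by
  refine and_congr_right fun _ => ⟨fun ⟨hB, hle⟩ => ⟨hB, hB.le, fun i => ?_⟩,
    fun ⟨hB, _, hcount⟩ => ⟨hB, fun i => ?_⟩⟩
  · have := hle i
    rwa [coe_orderIsoOfFin_apply, orderEmbOfFin_le_iff] at this
  · rw [coe_orderIsoOfFin_apply, orderEmbOfFin_le_iff]
    exact hcount i

theorem exists_isShiftedBasis_superset {n : ℕ} {s : Fin n → ℕ} (hs : StrictMono s)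
    (hpos : ∀ i, 0 < s i) {A : Finset ℕ} (hApos : ∀ a ∈ A, 0 < a) (hA : ShiftedBound n s A) :
    ∃ B, IsShiftedBasis n s B ∧ A ⊆ B := by
  induction h : n - #A generalizing A with
  | zero => exact ⟨A, isShiftedBasis_iff.2 ⟨hApos, by have := hA.1; omega, hA⟩, subset_rfl⟩
  | succ d ih =>
    have hex : ∃ x, 0 < x ∧ x ∉ A := by
      obtain ⟨x, hx⟩ := Infinite.exists_notMem_finset (insert 0 A)
      exact ⟨x, Nat.pos_of_ne_zero fun h => hx (h ▸ mem_insert_self 0 A),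
        fun h => hx (mem_insert_of_mem h)⟩
    obtain ⟨hxpos, hxA⟩ := Nat.find_spec hex
    have hbelow : ∀ y, 0 < y → y < Nat.find hex → y ∈ A := fun y hy hlt => by
      by_contra hyA
      exact Nat.find_min hex hlt ⟨hy, hyA⟩
    obtain ⟨B, hB, hsub⟩ := ih (A := insert (Nat.find hex) A)
      (fun a ha => (mem_insert.1 ha).elim (· ▸ hxpos) (hApos a))
      (hA.insert hs hpos (by omega) hxA hbelow) (by rw [card_insert_of_notMem hxA]; omega)
    exact ⟨B, hB, (subset_insert _ A).trans hsub⟩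

theorem exists_isShiftedBasis_superset_iff {n : ℕ} {s : Fin n → ℕ} (hs : StrictMono s)
    (hpos : ∀ i, 0 < s i) {A : Finset ℕ} (hApos : ∀ a ∈ A, 0 < a) :
    (∃ B, IsShiftedBasis n s B ∧ A ⊆ B) ↔ ShiftedBound n s A :=
  ⟨fun ⟨_, hB, hAB⟩ => (isShiftedBasis_iff.1 hB).2.2.mono hAB,
    exists_isShiftedBasis_superset hs hpos hApos⟩

theorem LinearIndependent.card_add_card_le {K ι η : Type*} [Field K] [Fintype ι] [Fintype η]
    {w : ι → η → K} (hw : LinearIndependent K w) (T : Finset η)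
    (hT : ∀ x, ∀ j ∈ T, w x j = 0) : Fintype.card ι + #T ≤ Fintype.card η := by
  classical
  let restrict (x : ι) : {j // j ∉ T} → K := fun j => w x j
  have hextend : w = Function.ExtendByZero.linearMap K Subtype.val ∘ restrict := by
    funext x j
    by_cases hj : j ∈ T
    · rw [hT x j hj]
      exact (Function.extend_apply' (f := Subtype.val) (restrict x) (0 : η → K) j
        (by rintro ⟨i, rfl⟩; exact i.2 hj)).symm
    · exact (Subtype.val_injective.extend_apply (restrict x) 0 ⟨j, hj⟩).symm
  have hcard := (LinearIndependent.of_comp _ (hextend ▸ hw)).fintype_card_le_finrank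
  rw [Module.finrank_fintype_fun_eq_card, Fintype.card_subtype_compl,
    Fintype.card_coe] at hcard
  have := card_le_univ T
  omega

theorem Matrix.det_ne_zero_of_norm_le_zpow {K ι : Type*} [NormedField K] [Fintype ι]
    [DecidableEq ι] (M : Matrix ι ι K) (c : K) (hc : c ≠ 0)
    (hcard : (Fintype.card ι : ℝ) < ‖c‖ + 1) (F G : ι → ℤ)
    (hdiag : ∀ i, ‖M i i‖ = ‖c‖ ^ (F i + G i))
    (hoff : ∀ i j, i ≠ j → ‖M i j‖ ≤ ‖c‖ ^ (F i + G j - 1)) : M.det ≠ 0 := by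
  set E := Matrix.diagonal (fun i => c ^ (-F i)) * M * Matrix.diagonal (fun j => c ^ (-G j))
  have hE : ∀ i j, ‖E i j‖ = ‖c‖ ^ (-F i) * ‖M i j‖ * ‖c‖ ^ (-G j) := by
    intro i j
    simp [E, Matrix.mul_diagonal, Matrix.diagonal_mul, norm_zpow]
  have hc' : ‖c‖ ≠ 0 := norm_ne_zero_iff.2 hc
  have hEdet : E.det ≠ 0 := by
    refine det_ne_zero_of_sum_row_lt_diag fun i => ?_
    have hEii : ‖E i i‖ = 1 := by
      rw [hE, hdiag, ← zpow_add₀ hc', ← zpow_add₀ hc']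
      ring_nf
      exact zpow_zero _
    have hEij : ∀ j ∈ univ.erase i, ‖E i j‖ ≤ ‖c‖⁻¹ := by
      intro j hj
      rw [hE]
      calc ‖c‖ ^ (-F i) * ‖M i j‖ * ‖c‖ ^ (-G j)
          ≤ ‖c‖ ^ (-F i) * ‖c‖ ^ (F i + G j - 1) * ‖c‖ ^ (-G j) := by
            gcongr
            exact hoff i j (ne_of_mem_erase hj).symm
        _ = ‖c‖⁻¹ := by
            rw [← zpow_add₀ hc', ← zpow_add₀ hc',
              show -F i + (F i + G j - 1) + -G j = (-1 : ℤ) by ring]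
            exact _root_.zpow_neg_one _
    have : Nonempty ι := ⟨i⟩
    rw [hEii]
    calc ∑ j ∈ univ.erase i, ‖E i j‖ ≤ #(univ.erase i) • ‖c‖⁻¹ := sum_le_card_nsmul _ _ _ hEij
      _ = (Fintype.card ι - 1 : ℝ) * ‖c‖⁻¹ := by
          rw [card_erase_of_mem (mem_univ i), card_univ, nsmul_eq_mul,
            Nat.cast_pred Fintype.card_pos]
      _ < 1 := by
          rw [← div_eq_mul_inv, div_lt_one (norm_pos_iff.2 hc)]
          linarith
  intro hM
  simp [E, Matrix.det_mul, hM] at hEdet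

theorem Fin.sum_Iio_eq_sum_Iio_add_sum_Ico {M : Type*} [AddCommMonoid M] {k : ℕ}
    (f : Fin k → M) {m l : Fin k} (hml : m ≤ l) :
    ∑ j ∈ Iio l, f j = ∑ j ∈ Iio m, f j + ∑ j ∈ Ico m l, f j := by
  rw [← sum_union (disjoint_left.2 fun j hj hj' => (mem_Iio.1 hj).not_ge (mem_Ico.1 hj').1)]
  congr 1
  ext j
  simp only [mem_Iio, mem_union, mem_Ico]
  omega

def slopePotential {k : ℕ} (a : Fin k → ℤ) (l : Fin k) : ℤ :=
  ∑ j ∈ Iio l, (2 * a j + 1)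

/-- The slopes `2 a_j + 1` of `slopePotential a` increase by at least `2` at each step, so its
graph lies strictly above every line of slope `2 a_m` through the point at `m`. -/
theorem two_mul_mul_sub_lt_slopePotential_sub {k : ℕ} {a : Fin k → ℤ} (ha : StrictMono a)
    {l m : Fin k} (hlm : l ≠ m) :
    2 * a m * ((l : ℤ) - m) < slopePotential a l - slopePotential a m := by
  unfold slopePotential
  rcases lt_or_gt_of_ne hlm with hlm | hml
  · rw [Fin.sum_Iio_eq_sum_Iio_add_sum_Ico _ hlm.le]
    have hbound : ∑ j ∈ Ico l m, (2 * a j + 1) ≤ #(Ico l m) • (2 * a m - 1) :=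
      sum_le_card_nsmul _ _ _ fun j hj => by
        have := ha (mem_Ico.1 hj).2
        omega
    rw [Fin.card_Ico, nsmul_eq_mul, Nat.cast_sub hlm.le] at hbound
    have : (1 : ℤ) ≤ m - l := by have := Fin.lt_def.1 hlm; omega
    nlinarith
  · rw [Fin.sum_Iio_eq_sum_Iio_add_sum_Ico _ hml.le]
    have hbound : #(Ico m l) • (2 * a m + 1) ≤ ∑ j ∈ Ico m l, (2 * a j + 1) :=
      card_nsmul_le_sum _ _ _ fun j hj => by
        have := ha.monotone (mem_Ico.1 hj).1
        omega
    rw [Fin.card_Ico, nsmul_eq_mul, Nat.cast_sub hml.le] at hbound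
    have : (1 : ℤ) ≤ l - m := by have := Fin.lt_def.1 hml; omega
    nlinarith

theorem Matrix.det_ne_zero_of_norm_le_pow_two_mul {K : Type*} [NormedField K] {k : ℕ}
    (M : Matrix (Fin k) (Fin k) K) (c : K) (hc : 1 ≤ ‖c‖) (hk : (k : ℝ) < ‖c‖ + 1)
    (a : Fin k → ℕ) (ha : StrictMono a) (d : ℕ)
    (hdiag : ∀ l, ‖M l l‖ = ‖c‖ ^ (2 * a l * (d + l)))
    (hoff : ∀ l m, ‖M l m‖ ≤ ‖c‖ ^ (2 * a m * (d + l))) : M.det ≠ 0 := by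
  set F := slopePotential fun j => (a j : ℤ)
  refine M.det_ne_zero_of_norm_le_zpow c (norm_pos_iff.1 (by linarith)) (by simpa using hk) F
    (fun m => 2 * a m * (d + m) - F m) (fun l => ?_) (fun l m hlm => ?_)
  · rw [hdiag, ← zpow_natCast]
    push_cast
    ring_nf
  · have key := two_mul_mul_sub_lt_slopePotential_sub
      (fun _ _ h => Nat.cast_lt.2 (ha h) : StrictMono fun j => (a j : ℤ)) hlm
    calc ‖M l m‖ ≤ ‖c‖ ^ (2 * a m * (d + l)) := hoff l m
      _ = ‖c‖ ^ ((2 * a m * (d + l) : ℕ) : ℤ) := (zpow_natCast _ _).symm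
      _ ≤ ‖c‖ ^ (F l + (2 * a m * (d + m) - F m) - 1) := by
          refine zpow_le_zpow_right₀ hc ?_
          push_cast
          linarith

def shiftedVector {K : Type*} [Field K] {n : ℕ} (s : Fin n → ℕ) (c : K) (j : ℕ) : Fin n → K :=
  fun i => if j ≤ s i then c ^ (2 * j * i) else 0

theorem shiftedBound_of_linearIndependent {K : Type*} [Field K] {n : ℕ} {s : Fin n → ℕ}
    (hs : StrictMono s) (c : K) {A : Finset ℕ}
    (hA : LinearIndependent K fun a : A => shiftedVector s c a) : ShiftedBound n s A := by
  refine ⟨by simpa using hA.fintype_card_le_finrank, fun i => ?_⟩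
  have hS : LinearIndependent K fun a : {a ∈ A | s i < a} => shiftedVector s c a :=
    hA.comp (fun a : ({a ∈ A | s i < a} : Finset ℕ) => (⟨a.1, (mem_filter.1 a.2).1⟩ : A))
      fun _ _ h => Subtype.ext (by simpa using h)
  have := hS.card_add_card_le (Iic i) fun a j hj =>
    if_neg (by have := (mem_filter.1 a.2).2; have := hs.monotone (mem_Iic.1 hj); omega)
  simpa [Fin.card_Iic, add_assoc] using this

theorem linearIndependent_shiftedVector {K : Type*} [NormedField K] {n : ℕ} {s : Fin n → ℕ}
    (c : K) (hc : 1 ≤ ‖c‖) (hn : (n : ℝ) < ‖c‖ + 1) {A : Finset ℕ} (hA : ShiftedBound n s A) :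
    LinearIndependent K fun a : A => shiftedVector s c a := by
  set k := #A
  have hkn : k ≤ n := hA.1
  set e := A.orderEmbOfFin (rfl : #A = k)
  let r : Fin k → Fin n := fun l => ⟨n - k + l, by omega⟩
  have hdiag : ∀ l, e l ≤ s (r l) := fun l => by
    rw [A.orderEmbOfFin_le_iff]
    have := hA.2 (r l)
    have : (r l : ℕ) = n - k + l := rfl
    omega
  let M : Matrix (Fin k) (Fin k) K := fun l m => shiftedVector s c (e m) (r l)
  have hM : M.det ≠ 0 := by
    refine M.det_ne_zero_of_norm_le_pow_two_mul c hc ?_ (fun m => e m) e.strictMono (n - k)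
      (fun l => ?_) (fun l m => ?_)
    · have : (k : ℝ) ≤ n := by exact_mod_cast hkn
      linarith
    · simp [M, shiftedVector, hdiag l, r]
    · simp only [M, shiftedVector, r]
      split_ifs
      · simp
      · simp only [norm_zero]
        positivity
  have hcols : LinearIndependent K fun m => shiftedVector s c (e m) :=
    LinearIndependent.of_comp (LinearMap.funLeft K K r)
      (Matrix.linearIndependent_cols_iff_isUnit.2 ((M.isUnit_iff_isUnit_det).2 hM.isUnit))
  exact (linearIndependent_equiv (A.orderIsoOfFin rfl).toEquiv).1 hcols

/-- Every shifted matroid `SM(s_1, …, s_n)` is representable over `ℚ`: there is a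
`ℚ`-vector space `V` and a family of `s_n` vectors in `V` (indexed by the ground set
`{1, …, s_n}`) such that a subset `A` of the ground set is independent in
`SM(s_1, …, s_n)` (i.e. contained in some basis) exactly when the corresponding
vectors are linearly independent. -/
theorem shifted_representable_rat (n : ℕ) (hn : 0 < n) (s : Fin n → ℕ)
    (hs : StrictMono s) (hpos : ∀ i, 0 < s i) :
    ∃ (V : Type) (_ : AddCommGroup V) (_ : Module ℚ V) (v : ℕ → V),
      ∀ A : Finset ℕ, A ⊆ Finset.Icc 1 (s ⟨n - 1, by omega⟩) →
        ((∃ B : Finset ℕ, IsShiftedBasis n s B ∧ A ⊆ B) ↔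
          LinearIndependent ℚ (fun x : A => v x.1)) := by
  have hc : ‖(n : ℚ) + 1‖ = n + 1 := by
    rw [← Rat.norm_cast_real]
    push_cast
    exact Real.norm_of_nonneg (by positivity)
  refine ⟨Fin n → ℚ, inferInstance, inferInstance, shiftedVector s ((n : ℚ) + 1), fun A hA => ?_⟩
  rw [exists_isShiftedBasis_superset_iff hs hpos fun a ha => (mem_Icc.1 (hA ha)).1]
  exact ⟨linearIndependent_shiftedVector _ (by rw [hc]; linarith) (by rw [hc]; linarith),
    shiftedBound_of_linearIndependent hs _⟩
end

section
/- Let n ≥ 3 and let q be a prime power with q ≤ n − 2. Then the Catalan matroid C_n is not representable over the finite field 𝔽_q with q elements. -/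
open Submodule Module
open scoped LinearAlgebra.Projectivization

section Contraction

variable {R K V ι : Type*} {v : ι → V} {s t : Set ι}

theorem LinearIndepOn.mkQ_comp_of_union [Ring R] [AddCommGroup V] [Module R V]
    (h : LinearIndepOn R v (s ∪ t)) (hst : Disjoint s t) :
    LinearIndepOn R ((span R (v '' s)).mkQ ∘ v) t := by
  obtain ⟨-, ht, hdisj⟩ := (linearIndepOn_union_iff hst).1 h
  exact ht.map (by rwa [Submodule.ker_mkQ, ← Set.image_eq_range, disjoint_comm])

theorem LinearIndepOn.mkQ_mem_span_of_not_linearIndepOn_insert [DivisionRing K] [AddCommGroup V]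
    [Module K V] {a : ι} (h : LinearIndepOn K v (s ∪ t))
    (hdep : ¬ LinearIndepOn K v (insert a (s ∪ t))) :
    (span K (v '' s)).mkQ (v a) ∈ span K ((span K (v '' s)).mkQ ∘ v '' t) := by
  have hva : v a ∈ span K (v '' (s ∪ t)) := h.mem_span_iff.2 fun hi => (hdep hi).elim
  have := Submodule.mem_map_of_mem (f := (span K (v '' s)).mkQ) hva
  rwa [Set.image_union, Submodule.span_union, Submodule.map_sup, Submodule.mkQ_map_self,
    bot_sup_eq, Submodule.map_span, ← Set.image_comp] at this

end Contraction

theorem Projectivization.card_le_of_finrank_le_two {K V : Type*} [Field K] [Finite K]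
    [AddCommGroup V] [Module K V] (h : finrank K V ≤ 2) : Nat.card (ℙ K V) ≤ Nat.card K + 1 :=
  calc Nat.card (ℙ K V) = ∑ i ∈ Finset.range (finrank K V), Nat.card K ^ i :=
        card_of_finrank K V rfl
    _ ≤ ∑ i ∈ Finset.range 2, Nat.card K ^ i :=
        Finset.sum_le_sum_of_subset (Finset.range_subset_range.2 h)
    _ = Nat.card K + 1 := by simp

theorem finrank_span_pair_le {K V : Type*} [DivisionRing K] [AddCommGroup V] [Module K V]
    (x y : V) : finrank K (span K {x, y}) ≤ 2 := by
  classical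
  exact (finrank_span_le_card {x, y}).trans (by simpa using Finset.card_le_two)

theorem Set.ncard_le_card_add_one_of_pairwise_linearIndepOn {K V ι : Type*} [Field K]
    [Finite K] [AddCommGroup V] [Module K V] {u : ι → V} {s : Set ι} {x y : V}
    (hs : ∀ i ∈ s, u i ∈ span K {x, y}) (hpair : s.Pairwise fun i j => LinearIndepOn K u {i, j}) :
    s.ncard ≤ Nat.card K + 1 := by
  rcases le_or_gt s.ncard 1 with hle | hlt
  · omega
  have hu0 : ∀ i ∈ s, u i ≠ 0 := fun i hi =>
    let ⟨j, hj, hji⟩ := s.exists_ne_of_one_lt_ncard hlt i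
    (hpair hi hj hji.symm).ne_zero (Set.mem_insert i _)
  let f : s → ℙ K (span K {x, y}) := fun i =>
    .mk K ⟨u i, hs i i.2⟩ (by simpa using hu0 i i.2)
  have hf : f.Injective := by
    rintro ⟨i, hi⟩ ⟨j, hj⟩ hfij
    by_contra hne
    have hij : i ≠ j := fun h => hne (Subtype.ext h)
    obtain ⟨c, hc⟩ := (Projectivization.mk_eq_mk_iff' K _ _ _ _).1 hfij
    exact (linearIndepOn_pair_iff u hij.symm (hu0 j hj)).1 (hpair hj hi hij.symm) c
      (congrArg Subtype.val hc)
  have : FiniteDimensional K (span K {x, y}) := .span_of_finite K (Set.toFinite _)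
  have : Finite (ℙ K (span K {x, y})) :=
    (Projectivization.finite_iff_of_finite K _).2 (Module.finite_of_finite K)
  calc s.ncard = Nat.card s := (Nat.card_coe_set_eq s).symm
    _ ≤ Nat.card (ℙ K (span K {x, y})) := Nat.card_le_card_of_injective f hf
    _ ≤ Nat.card K + 1 := Projectivization.card_le_of_finrank_le_two
        (finrank_span_pair_le x y)

section DyckPath

open Finset

theorem ht_insert {A : Finset ℕ} {a : ℕ} (x : ℕ) (ha : 1 ≤ a) (haA : a ∉ A) :
    ht (insert a A) x = ht A x + if a ≤ x then 2 else 0 := by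
  unfold ht
  split_ifs with hax
  · rw [insert_inter_of_mem (mem_Icc.2 ⟨ha, hax⟩), card_insert_of_notMem (by simp [haA])]
    push_cast
    ring
  · rw [insert_inter_of_notMem (by simp [hax]), add_zero]

theorem ht_Icc_one (m x : ℕ) : ht (Icc 1 m) x = 2 * (min m x : ℕ) - x := by
  have hI : Icc 1 m ∩ Icc 1 x = Icc 1 (min m x) := by ext; simp only [mem_inter, mem_Icc]; omega
  rw [ht, hI, Nat.card_Icc, Nat.add_sub_cancel]

theorem isDyck_Icc_union_pair {n a b : ℕ} (ha : a ∈ Icc (n - 1) (2 * n - 2))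
    (hb : b ∈ Icc (n - 1) (2 * n - 2)) (hab : a ≠ b) : IsDyck n (Icc 1 (n - 2) ∪ {a, b}) := by
  rw [mem_Icc] at ha hb
  have hb' : b ∉ Icc 1 (n - 2) := by simp only [mem_Icc]; omega
  have ha' : a ∉ insert b (Icc 1 (n - 2)) := by simp only [mem_insert, mem_Icc]; omega
  rw [union_insert, union_singleton]
  refine ⟨?_, ?_, fun x hx => ?_⟩
  · intro x hx
    simp only [mem_insert, mem_Icc] at hx ⊢
    omega
  · rw [card_insert_of_notMem ha', card_insert_of_notMem hb', Nat.card_Icc]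
    omega
  · rw [ht_insert x (by omega) ha', ht_insert x (by omega) hb', ht_Icc_one]
    split_ifs <;> omega

end DyckPath

def RepresentsCatalan (K : Type*) {V : Type*} [Semiring K] [AddCommMonoid V] [Module K V]
    (n : ℕ) (v : ℕ → V) : Prop :=
  ∀ A : Finset ℕ, A ⊆ Finset.Icc 1 (2 * n) →
    ((∃ B, IsDyck n B ∧ A ⊆ B) ↔ LinearIndepOn K v (A : Set ℕ))

namespace RepresentsCatalan

open Finset

variable {K V : Type*} [Semiring K] [AddCommMonoid V] [Module K V] {n a b c : ℕ} {v : ℕ → V}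

theorem linearIndepOn_Icc_union_pair (hv : RepresentsCatalan K n v)
    (ha : a ∈ Icc (n - 1) (2 * n - 2)) (hb : b ∈ Icc (n - 1) (2 * n - 2)) (hab : a ≠ b) :
    LinearIndepOn K v (↑(Icc 1 (n - 2)) ∪ {a, b}) := by
  have hsub : Icc 1 (n - 2) ∪ {a, b} ⊆ Icc 1 (2 * n) := by
    intro x hx
    simp only [mem_union, mem_insert, mem_singleton, mem_Icc] at ha hb hx ⊢
    omega
  simpa using (hv _ hsub).1 ⟨_, isDyck_Icc_union_pair ha hb hab, subset_rfl⟩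

theorem not_linearIndepOn_insert_Icc_union_pair (hv : RepresentsCatalan K n v)
    (ha : a ∈ Icc (n - 1) (2 * n - 2)) (hb : b ∈ Icc (n - 1) (2 * n - 2))
    (hc : c ∈ Icc (n - 1) (2 * n - 2)) (hab : a ≠ b) (hca : c ≠ a) (hcb : c ≠ b) :
    ¬ LinearIndepOn K v (insert c (↑(Icc 1 (n - 2)) ∪ {a, b})) := by
  intro hli
  simp only [mem_Icc] at ha hb hc
  have hsub : insert c (Icc 1 (n - 2) ∪ {a, b}) ⊆ Icc 1 (2 * n) := by
    intro x hx
    simp only [mem_union, mem_insert, mem_singleton, mem_Icc] at hx ⊢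
    omega
  obtain ⟨B, hB, hAB⟩ := (hv _ hsub).2 (by simpa using hli)
  have hcard := card_le_card hAB
  have hcC : c ∉ Icc 1 (n - 2) ∪ {a, b} := by
    simp only [mem_union, mem_insert, mem_singleton, mem_Icc]; omega
  have hCab : Disjoint (Icc 1 (n - 2)) {a, b} := by
    simp only [disjoint_insert_right, disjoint_singleton_right, mem_Icc]; omega
  rw [hB.2.1, card_insert_of_notMem hcC, card_union_of_disjoint hCab, card_pair hab,
    Nat.card_Icc] at hcard
  omega

end RepresentsCatalan

open Finset in
theorem catalan_not_representable_general (n q : ℕ) (hn : 3 ≤ n)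
    (hqn : q ≤ n - 2) (K : Type) [Field K] [Fintype K] (hK : Fintype.card K = q) :
    ¬ ∃ (V : Type) (_ : AddCommGroup V) (_ : Module K V) (v : ℕ → V),
        ∀ A : Finset ℕ, A ⊆ Finset.Icc 1 (2 * n) →
          ((∃ B : Finset ℕ, IsDyck n B ∧ A ⊆ B) ↔
            LinearIndependent K (fun x : A => v x.1)) := by
  rintro ⟨V, _, _, v, hv⟩
  replace hv : RepresentsCatalan K n v := hv
  set R := Icc (n - 1) (2 * n - 2)
  set u := (span K (v '' ↑(Icc 1 (n - 2)))).mkQ ∘ v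
  have hdisj : ∀ a ∈ R, ∀ b ∈ R, Disjoint (↑(Icc 1 (n - 2)) : Set ℕ) {a, b} := by
    intro a ha b hb
    simp only [R, mem_Icc] at ha hb
    simp only [coe_Icc, Set.disjoint_insert_right, Set.disjoint_singleton_right, Set.mem_Icc]
    omega
  have hpair : (R : Set ℕ).Pairwise fun a b => LinearIndepOn K u {a, b} := fun a ha b hb hab =>
    (hv.linearIndepOn_Icc_union_pair ha hb hab).mkQ_comp_of_union (hdisj a ha b hb)
  have hspan : ∀ c ∈ (R : Set ℕ), u c ∈ span K {u (n - 1), u n} := by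
    intro c hc
    by_cases hc' : c = n - 1 ∨ c = n
    · rcases hc' with rfl | rfl <;> exact subset_span (by simp)
    have hn1 : n - 1 ∈ R := by simp only [R, mem_Icc]; omega
    have hn0 : n ∈ R := by simp only [R, mem_Icc]; omega
    simpa [u, Set.image_pair] using
      (hv.linearIndepOn_Icc_union_pair hn1 hn0 (by omega)).mkQ_mem_span_of_not_linearIndepOn_insert
        (hv.not_linearIndepOn_insert_Icc_union_pair hn1 hn0 hc (by omega) (by omega) (by omega))
  have := Set.ncard_le_card_add_one_of_pairwise_linearIndepOn hspan hpair
  rw [Set.ncard_coe_finset, Nat.card_Icc, Nat.card_eq_fintype_card, hK] at this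
  omega

/-- For `n ≥ 3` and a prime power `q ≤ n − 2`, the Catalan matroid `C_n` is not
representable over the finite field `𝔽_q` with `q` elements: for no `𝔽_q`-vector
space `V` and family of vectors `v_1, …, v_{2n}` in `V` (indexed by the ground set
`{1, …, 2n}`) is a subset `A` of the ground set independent in `C_n` exactly when
the corresponding vectors are linearly independent. -/
theorem catalan_not_representable (n q : ℕ) (hn : 3 ≤ n) (hq : IsPrimePow q)
    (hqn : q ≤ n - 2) (K : Type) [Field K] [Fintype K] (hK : Fintype.card K = q) :
    ¬ ∃ (V : Type) (_ : AddCommGroup V) (_ : Module K V) (v : ℕ → V),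
        ∀ A : Finset ℕ, A ⊆ Finset.Icc 1 (2 * n) →
          ((∃ B : Finset ℕ, IsDyck n B ∧ A ⊆ B) ↔
            LinearIndependent K (fun x : A => v x.1)) :=
  catalan_not_representable_general n q hn hqn K hK
end
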